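/- Sharpness of power weight conditions: let 1<p<∞ and u(x) = |x - x_A|^{-a} with 0 < a < d and x_A ≠ 0. If |x|^b ∈ A^u_{p,q}, then necessarily q < r_u = d/a and -d/q + d/r_u < b < d/p'. -/

import Mathlib

open MeasureTheory ENNReal

noncomputable section

/-- Euclidean space `ℝ^d`. -/
abbrev Rd (d : ℕ) := EuclideanSpace ℝ (Fin d)

/-- The (closed) cube with center `c` and half side-length `r`. -/
def cube {d : ℕ} (c : Rd d) (r : ℝ) : Set (Rd d) := {x | ∀ i, |x i - c i| ≤ r}

/-- Average `⟨f⟩_Q = (1/|Q|) ∫_Q f`. -/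
def avg {d : ℕ} (Q : Set (Rd d)) (f : Rd d → ℝ≥0∞) : ℝ≥0∞ :=
  (∫⁻ x in Q, f x) / volume Q

/-- Essential supremum of `f` on `Q`. -/
def esssupQ {d : ℕ} (Q : Set (Rd d)) (f : Rd d → ℝ≥0∞) : ℝ≥0∞ :=
  essSup f (volume.restrict Q)

/-- The conjugate exponent `t' = t/(t-1)`. -/
def conjE (t : ℝ) : ℝ := t / (t - 1)

open Metric Set

section Helpers

variable {d : ℕ}

lemma coord_le_norm (x : Rd d) (i : Fin d) : |x i| ≤ ‖x‖ := by
  rw [EuclideanSpace.norm_eq]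
  have h1 : |x i| = Real.sqrt (‖x i‖ ^ 2) := by
    rw [Real.sqrt_sq_eq_abs]; simp [Real.norm_eq_abs]
  rw [h1]
  apply Real.sqrt_le_sqrt
  exact Finset.single_le_sum (f := fun j => ‖x j‖^2) (fun j _ => by positivity) (Finset.mem_univ i)

lemma ball_subset_cube (c : Rd d) (r : ℝ) : ball c r ⊆ cube c r := by
  intro x hx i
  have : |(x - c) i| ≤ ‖x - c‖ := coord_le_norm _ i
  simp only [PiLp.sub_apply] at this
  exact this.trans (le_of_lt (mem_ball_iff_norm.mp hx))

lemma norm_sub_le_of_cube {c : Rd d} {r : ℝ} (hr : 0 ≤ r) {x : Rd d}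
    (hx : x ∈ cube c r) : ‖x - c‖ ≤ Real.sqrt d * r := by
  rw [EuclideanSpace.norm_eq]
  have : ∑ i, ‖(x - c) i‖ ^ 2 ≤ ∑ _i : Fin d, r ^ 2 := by
    apply Finset.sum_le_sum
    intro i _
    have h := abs_le.mp (hx i)
    simp only [PiLp.sub_apply, Real.norm_eq_abs]
    have h2 : |x i - c i| ≤ r := hx i
    nlinarith [abs_nonneg (x i - c i), sq_abs (x i - c i)]
  calc Real.sqrt (∑ i, ‖(x - c) i‖ ^ 2) ≤ Real.sqrt (∑ _i : Fin d, r ^ 2) :=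
        Real.sqrt_le_sqrt this
    _ = Real.sqrt d * r := by
        rw [Finset.sum_const, Finset.card_univ, Fintype.card_fin, nsmul_eq_mul,
          Real.sqrt_mul (by positivity), Real.sqrt_sq hr]

lemma cube_subset_closedBall (c : Rd d) {r : ℝ} (hr : 0 ≤ r) :
    cube c r ⊆ closedBall c (Real.sqrt d * r) := fun _x hx =>
  mem_closedBall_iff_norm.mpr (norm_sub_le_of_cube hr hx)

lemma cube_mono {c : Rd d} {r r' : ℝ} (h : r ≤ r') : cube c r ⊆ cube c r' :=
  fun _x hx i => (hx i).trans h

lemma measurableSet_cube (c : Rd d) (r : ℝ) : MeasurableSet (cube c r) := by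
  have : cube c r = ⋂ i, {x : Rd d | |x i - c i| ≤ r} := by
    ext x; simp [cube, Set.mem_iInter]
  rw [this]
  apply MeasurableSet.iInter
  intro i
  have hm : Measurable fun x : Rd d => |x i - c i| :=
    ((EuclideanSpace.proj (𝕜 := ℝ) i).continuous.measurable.sub measurable_const).abs
  exact measurableSet_le hm measurable_const

lemma nontrivial_Rd (hd : 0 < d) : Nontrivial (Rd d) := by
  refine ⟨⟨EuclideanSpace.single ⟨0, hd⟩ 1, 0, ?_⟩⟩
  intro h
  have := congrArg (fun v : Rd d => v ⟨0, hd⟩) h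
  simp [EuclideanSpace.single] at this

lemma volume_cube_pos (c : Rd d) {r : ℝ} (hr : 0 < r) :
    0 < volume (cube c r) :=
  lt_of_lt_of_le (measure_ball_pos _ _ hr) (measure_mono (ball_subset_cube c r))

lemma volume_cube_lt_top (c : Rd d) {r : ℝ} (hr : 0 < r) :
    volume (cube c r) < ⊤ :=
  lt_of_le_of_lt (measure_mono (cube_subset_closedBall c hr.le)) measure_closedBall_lt_top

lemma volume_cube_le (c : Rd d) {r : ℝ} (hr : 0 < r) :
    volume (cube c r) ≤ ENNReal.ofReal ((Real.sqrt d * r) ^ d) * volume (ball (0 : Rd d) 1) := by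
  refine le_trans (measure_mono (cube_subset_closedBall c hr.le)) ?_
  rw [Measure.addHaar_closedBall volume c (by positivity), finrank_euclideanSpace_fin]

lemma const_mul_vol_le_setLIntegral {S : Set (Rd d)} (hS : MeasurableSet S)
    (f : Rd d → ℝ≥0∞) (m : ℝ≥0∞) (h : ∀ x ∈ S, m ≤ f x) :
    m * volume S ≤ ∫⁻ x in S, f x := by
  rw [← setLIntegral_const S m]
  exact setLIntegral_mono' hS h

lemma setLIntegral_le_avg_mul {S Q : Set (Rd d)} (hSQ : S ⊆ Q) (f : Rd d → ℝ≥0∞) :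
    (∫⁻ x in S, f x) / volume Q ≤ avg Q f :=
  ENNReal.div_le_div_right (lintegral_mono_set hSQ) _

lemma const_le_avg {c : Rd d} {r : ℝ} (hr : 0 < r) (f : Rd d → ℝ≥0∞) (m : ℝ≥0∞)
    (h : ∀ x ∈ cube c r, m ≤ f x) : m ≤ avg (cube c r) f := by
  have h1 := const_mul_vol_le_setLIntegral (measurableSet_cube c r) f m h
  rw [avg, ENNReal.le_div_iff_mul_le (Or.inl (volume_cube_pos c hr).ne')
    (Or.inl (volume_cube_lt_top c hr).ne)]
  exact h1

lemma avg_le_esssup {c : Rd d} {r : ℝ} (hr : 0 < r) (f : Rd d → ℝ≥0∞) :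
    avg (cube c r) f ≤ esssupQ (cube c r) f := by
  have h1 : (∫⁻ x in cube c r, f x) ≤ esssupQ (cube c r) f * volume (cube c r) := by
    calc (∫⁻ x in cube c r, f x)
        ≤ ∫⁻ _x in cube c r, esssupQ (cube c r) f := lintegral_mono_ae (ae_le_essSup f)
      _ = esssupQ (cube c r) f * volume (cube c r) := by rw [setLIntegral_const]
  rw [avg, ENNReal.div_le_iff_le_mul (Or.inl (volume_cube_pos c hr).ne')
    (Or.inl (volume_cube_lt_top c hr).ne)]
  exact h1

lemma esssup_mono_set {S Q : Set (Rd d)} (h : S ⊆ Q) (f : Rd d → ℝ≥0∞) :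
    esssupQ S f ≤ esssupQ Q f :=
  essSup_mono_measure (Measure.absolutelyContinuous_of_le (Measure.restrict_mono h le_rfl))

lemma avg_pos (hd : 0 < d) {c : Rd d} {r : ℝ} (hr : 0 < r) (x₀ : Rd d)
    (f : Rd d → ℝ≥0∞) (hf : Measurable f) (h : ∀ x, x ≠ x₀ → f x ≠ 0) :
    0 < avg (cube c r) f := by
  haveI := nontrivial_Rd hd
  rw [avg]
  apply ENNReal.div_pos _ (volume_cube_lt_top c hr).ne
  rw [← pos_iff_ne_zero, lintegral_pos_iff_support hf]
  have hsub : cube c r \ {x₀} ⊆ Function.support f := fun x hx => h x hx.2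
  have hdiff : volume (cube c r \ {x₀}) = volume (cube c r) :=
    measure_diff_null (measure_singleton x₀)
  calc (0 : ℝ≥0∞) < volume (cube c r) := volume_cube_pos c hr
    _ = volume (cube c r \ {x₀}) := hdiff.symm
    _ ≤ (volume.restrict (cube c r)) (Function.support f) := by
        rw [Measure.restrict_apply₀']
        · exact measure_mono (fun x hx => ⟨hsub hx, hx.1⟩)
        · exact (measurableSet_cube c r).nullMeasurableSet

lemma ennrpow_anti {x y : ℝ≥0∞} {t : ℝ} (hxy : x ≤ y) (ht : t ≤ 0) :
    y ^ t ≤ x ^ t := by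
  have h1 : x ^ t = (x ^ (-t))⁻¹ := by rw [← ENNReal.rpow_neg, neg_neg]
  have h2 : y ^ t = (y ^ (-t))⁻¹ := by rw [← ENNReal.rpow_neg, neg_neg]
  rw [h1, h2]
  exact ENNReal.inv_le_inv.mpr (ENNReal.rpow_le_rpow hxy (by linarith))

lemma min_rpow_le {A B x t : ℝ} (hA : 0 < A) (hAx : A ≤ x) (hxB : x ≤ B) :
    min (A ^ t) (B ^ t) ≤ x ^ t := by
  rcases le_or_gt 0 t with ht | ht
  · exact le_trans (min_le_left _ _) (Real.rpow_le_rpow hA.le hAx ht)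
  · exact le_trans (min_le_right _ _)
      (Real.rpow_le_rpow_of_nonpos (hA.trans_le hAx) hxB ht.le)

lemma ennrpow_ne_zero {x : ℝ≥0∞} (hx : x ≠ 0) {t : ℝ} (ht : 0 < t) : x ^ t ≠ 0 := by
  intro h
  rcases ENNReal.rpow_eq_zero_iff.mp h with ⟨h1, _⟩ | ⟨_, h2⟩
  · exact hx h1
  · linarith

lemma ennrpow_ofReal_ne_zero {s t : ℝ} (hs : 0 < s) : ENNReal.ofReal s ^ t ≠ 0 := by
  intro h
  rcases ENNReal.rpow_eq_zero_iff.mp h with ⟨h1, _⟩ | ⟨h1, _⟩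
  · rw [ENNReal.ofReal_eq_zero] at h1; linarith
  · exact ENNReal.ofReal_ne_top h1

lemma annulus_lintegral_ge (x₀ : Rd d) {t R₁ R₂ : ℝ} (h1 : 0 < R₁) (h12 : R₁ ≤ R₂)
    (ht : t ≤ 0) :
    ENNReal.ofReal (R₂ ^ t * (R₂ ^ d - R₁ ^ d)) * volume (ball (0 : Rd d) 1)
      ≤ ∫⁻ x in ball x₀ R₂ \ ball x₀ R₁, ENNReal.ofReal ‖x - x₀‖ ^ t := by
  have hmeas : MeasurableSet (ball x₀ R₂ \ ball x₀ R₁) :=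
    measurableSet_ball.diff measurableSet_ball
  have hpt : ∀ x ∈ ball x₀ R₂ \ ball x₀ R₁,
      ENNReal.ofReal (R₂ ^ t) ≤ ENNReal.ofReal ‖x - x₀‖ ^ t := by
    intro x hx
    have hge : R₁ ≤ ‖x - x₀‖ := by
      have := hx.2
      simp only [mem_ball, not_lt, dist_eq_norm] at this
      exact this
    have hle : ‖x - x₀‖ ≤ R₂ := by
      have := hx.1
      simp only [mem_ball, dist_eq_norm] at this
      exact this.le
    have h0 : (0:ℝ) < ‖x - x₀‖ := h1.trans_le hge
    rw [ENNReal.ofReal_rpow_of_pos h0]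
    exact ENNReal.ofReal_le_ofReal (Real.rpow_le_rpow_of_nonpos h0 hle ht)
  have hvol : volume (ball x₀ R₂ \ ball x₀ R₁) =
      ENNReal.ofReal (R₂ ^ d - R₁ ^ d) * volume (ball (0 : Rd d) 1) := by
    rw [measure_diff (ball_subset_ball h12) measurableSet_ball.nullMeasurableSet
      measure_ball_lt_top.ne]
    rw [Measure.addHaar_ball_of_pos volume x₀ (h1.trans_le h12),
      Measure.addHaar_ball_of_pos volume x₀ h1, finrank_euclideanSpace_fin]
    rw [← ENNReal.sub_mul (fun _ _ => measure_ball_lt_top.ne),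
      ← ENNReal.ofReal_sub _ (by positivity)]
  calc ENNReal.ofReal (R₂ ^ t * (R₂ ^ d - R₁ ^ d)) * volume (ball (0 : Rd d) 1)
      = ENNReal.ofReal (R₂ ^ t) * volume (ball x₀ R₂ \ ball x₀ R₁) := by
        rw [hvol, ENNReal.ofReal_mul (Real.rpow_nonneg (h1.trans_le h12).le t), mul_assoc]
    _ ≤ ∫⁻ x in ball x₀ R₂ \ ball x₀ R₁, ENNReal.ofReal ‖x - x₀‖ ^ t := by
        rw [← setLIntegral_const (ball x₀ R₂ \ ball x₀ R₁) _]
        exact setLIntegral_mono' hmeas hpt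

lemma disjoint_ann {x₀ : Rd d} {a₁ b₁ a₂ b₂ : ℝ} (h : b₁ ≤ a₂) :
    Disjoint (ball x₀ b₁ \ ball x₀ a₁) (ball x₀ b₂ \ ball x₀ a₂) := by
  rw [Set.disjoint_left]; intro x hx1 hx2
  exact hx2.2 (mem_of_mem_of_subset hx1.1 (ball_subset_ball h))

lemma half_pow_lt_one (hd : 0 < d) : ((1:ℝ)/2) ^ d < 1 :=
  pow_lt_one₀ (by norm_num) (by norm_num) hd.ne'

lemma lintegral_rpow_near_eq_top (hd : 0 < d) (x₀ : Rd d) {t ε : ℝ}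
    (ht : t ≤ -(d:ℝ)) (hε : 0 < ε) :
    ∫⁻ x in ball x₀ ε, ENNReal.ofReal ‖x - x₀‖ ^ t = ⊤ := by
  set A : ℕ → Set (Rd d) := fun k => ball x₀ (ε / 2 ^ k) \ ball x₀ (ε / 2 ^ (k + 1)) with hA
  have hrpos : ∀ k : ℕ, (0:ℝ) < ε / 2 ^ k := fun k => by positivity
  have hmeas : ∀ k, MeasurableSet (A k) := fun k => measurableSet_ball.diff measurableSet_ball
  have hdisj : Pairwise (Function.onFun Disjoint A) := by
    intro i j hij
    rcases hij.lt_or_gt with h | h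
    · exact (disjoint_ann (by
        apply div_le_div_of_nonneg_left hε.le (by positivity)
        exact pow_le_pow_right₀ (by norm_num) h)).symm
    · exact disjoint_ann (by
        apply div_le_div_of_nonneg_left hε.le (by positivity)
        exact pow_le_pow_right₀ (by norm_num) h)
  have hsub : (⋃ k, A k) ⊆ ball x₀ ε := by
    apply Set.iUnion_subset
    intro k
    refine (Set.diff_subset).trans (ball_subset_ball ?_)
    apply div_le_self hε.le
    exact one_le_pow₀ (by norm_num)
  have ht0 : t ≤ 0 := ht.trans (neg_nonpos.mpr (Nat.cast_nonneg d))
  set c0 : ℝ≥0∞ := ENNReal.ofReal (ε ^ (t + d) * (1 - (1/2:ℝ) ^ d)) *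
    volume (ball (0 : Rd d) 1) with hc0
  have hterm : ∀ k : ℕ, c0 ≤ ∫⁻ x in A k, ENNReal.ofReal ‖x - x₀‖ ^ t := by
    intro k
    refine le_trans ?_ (annulus_lintegral_ge x₀ (hrpos (k+1))
      (by apply div_le_div_of_nonneg_left hε.le (by positivity)
          exact pow_le_pow_right₀ (by norm_num) (Nat.le_succ k)) ht0)
    apply mul_le_mul_left
    apply ENNReal.ofReal_le_ofReal
    have hrk := hrpos k
    have key : (ε / 2 ^ k) ^ t * ((ε / 2 ^ k) ^ d - (ε / 2 ^ (k+1)) ^ d)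
        = (ε / 2 ^ k) ^ (t + (d:ℝ)) * (1 - (1/2:ℝ) ^ d) := by
      have h1 : (ε / 2 ^ (k+1)) ^ d = (ε / 2 ^ k) ^ d * (1/2:ℝ) ^ d := by
        rw [← mul_pow]; ring_nf
      rw [h1, Real.rpow_add hrk, Real.rpow_natCast]
      ring
    rw [key]
    apply mul_le_mul_of_nonneg_right _ (by linarith [half_pow_lt_one hd])
    apply Real.rpow_le_rpow_of_nonpos hrk (div_le_self hε.le (by
      exact one_le_pow₀ (by norm_num))) (by push_cast; linarith)
  have hc0ne : c0 ≠ 0 := by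
    apply mul_ne_zero
    · refine (ENNReal.ofReal_pos.mpr ?_).ne'
      apply mul_pos (Real.rpow_pos_of_pos hε _)
      linarith [half_pow_lt_one hd]
    · exact (measure_ball_pos _ _ one_pos).ne'
  have htop : (⊤ : ℝ≥0∞) ≤ ∫⁻ x in ball x₀ ε, ENNReal.ofReal ‖x - x₀‖ ^ t := by
    calc (⊤:ℝ≥0∞) = ∑' _k : ℕ, c0 := (ENNReal.tsum_const_eq_top_of_ne_zero hc0ne).symm
      _ ≤ ∑' k : ℕ, ∫⁻ x in A k, ENNReal.ofReal ‖x - x₀‖ ^ t := ENNReal.tsum_le_tsum hterm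
      _ = ∫⁻ x in ⋃ k, A k, ENNReal.ofReal ‖x - x₀‖ ^ t := (lintegral_iUnion hmeas hdisj _).symm
      _ ≤ _ := lintegral_mono_set hsub
  exact top_le_iff.mp htop

lemma lintegral_rpow_far_eq_top (hd : 0 < d) {ρ : ℝ} (hρ : 0 < ρ) :
    ∫⁻ x in (ball (0 : Rd d) ρ)ᶜ, ENNReal.ofReal ‖x‖ ^ (-(d:ℝ)) = ⊤ := by
  set A : ℕ → Set (Rd d) := fun k => ball 0 (ρ * 2 ^ (k+1)) \ ball 0 (ρ * 2 ^ k) with hA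
  have hrpos : ∀ k : ℕ, (0:ℝ) < ρ * 2 ^ k := fun k => by positivity
  have hmono : ∀ {i j : ℕ}, i ≤ j → ρ * 2 ^ i ≤ ρ * 2 ^ j := fun h =>
    mul_le_mul_of_nonneg_left (pow_le_pow_right₀ (by norm_num) h) hρ.le
  have hmeas : ∀ k, MeasurableSet (A k) := fun k => measurableSet_ball.diff measurableSet_ball
  have hdisj : Pairwise (Function.onFun Disjoint A) := by
    intro i j hij
    rcases hij.lt_or_gt with h | h
    · exact disjoint_ann (hmono h)
    · exact (disjoint_ann (hmono h)).symm
  have hsub : (⋃ k, A k) ⊆ (ball (0 : Rd d) ρ)ᶜ := by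
    apply Set.iUnion_subset
    intro k x hx hmem
    exact hx.2 (mem_of_mem_of_subset hmem (ball_subset_ball (by
      simpa using hmono (Nat.zero_le k))))
  have hterm : ∀ k : ℕ,
      ENNReal.ofReal (1 - (1/2:ℝ) ^ d) * volume (ball (0 : Rd d) 1)
        ≤ ∫⁻ x in A k, ENNReal.ofReal ‖x‖ ^ (-(d:ℝ)) := by
    intro k
    have hinteg : ∫⁻ x in A k, ENNReal.ofReal ‖x‖ ^ (-(d:ℝ))
        = ∫⁻ x in A k, ENNReal.ofReal ‖x - 0‖ ^ (-(d:ℝ)) :=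
      lintegral_congr fun x => by rw [sub_zero]
    rw [hinteg]
    refine le_trans ?_ (annulus_lintegral_ge (0 : Rd d) (hrpos k)
      (hmono (Nat.le_succ k)) (neg_nonpos.mpr (Nat.cast_nonneg d)))
    apply mul_le_mul_left
    apply ENNReal.ofReal_le_ofReal
    have h2 := hrpos (k+1)
    have key : (ρ * 2 ^ (k+1)) ^ (-(d:ℝ)) * ((ρ * 2 ^ (k+1)) ^ d - (ρ * 2 ^ k) ^ d)
        = 1 - (1/2:ℝ) ^ d := by
      have h1 : (ρ * 2 ^ k) ^ d = (ρ * 2 ^ (k+1)) ^ d * (1/2:ℝ) ^ d := by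
        rw [← mul_pow]; ring_nf
      have h3 : (ρ * 2 ^ (k+1)) ^ (-(d:ℝ)) = ((ρ * 2 ^ (k+1)) ^ d)⁻¹ := by
        rw [Real.rpow_neg h2.le, Real.rpow_natCast]
      rw [h1, h3, mul_sub, inv_mul_cancel₀ (by positivity)]
      field_simp
    rw [key]
  have hc0ne : ENNReal.ofReal (1 - (1/2:ℝ) ^ d) * volume (ball (0 : Rd d) 1) ≠ 0 := by
    apply mul_ne_zero
    · exact (ENNReal.ofReal_pos.mpr (by linarith [half_pow_lt_one hd])).ne'
    · exact (measure_ball_pos _ _ one_pos).ne'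
  have htop : (⊤ : ℝ≥0∞) ≤ ∫⁻ x in (ball (0 : Rd d) ρ)ᶜ, ENNReal.ofReal ‖x‖ ^ (-(d:ℝ)) := by
    calc (⊤:ℝ≥0∞) = ∑' _k : ℕ, ENNReal.ofReal (1 - (1/2:ℝ) ^ d) * volume (ball (0 : Rd d) 1) :=
          (ENNReal.tsum_const_eq_top_of_ne_zero hc0ne).symm
      _ ≤ ∑' k : ℕ, ∫⁻ x in A k, ENNReal.ofReal ‖x‖ ^ (-(d:ℝ)) := ENNReal.tsum_le_tsum hterm
      _ = ∫⁻ x in ⋃ k, A k, ENNReal.ofReal ‖x‖ ^ (-(d:ℝ)) := (lintegral_iUnion hmeas hdisj _).symm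
      _ ≤ _ := lintegral_mono_set hsub
  exact top_le_iff.mp htop

end Helpers

set_option maxHeartbeats 2000000 in
/-- sharpness of the power weight conditions. For `u(x) = |x - x_A|^{-a}`,
`0 < a < d`, `x_A ≠ 0`: if `|x|^b ∈ A^u_{p,q}` then `q < d/a`, `-d/q + a < b` and
`b < d/p'`. (Here `r_u = d/a`, so `-d/q + d/r_u = -d/q + a`.) -/
theorem power_weight_conditions_necessary
    (d : ℕ) (hd : 0 < d)
    (a p p' q b : ℝ) (xA : Rd d) (hxA : xA ≠ 0)
    (ha0 : 0 < a) (had : a < d)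
    (hp : 1 < p) (hpp' : 1 / p + 1 / p' = 1) (hq : 0 < q)
    (hmem : ∃ C : ℝ≥0∞, C ≠ ∞ ∧ ∀ c : Rd d, ∀ r : ℝ, 0 < r →
      (avg (cube c r) (fun x =>
          (ENNReal.ofReal ‖x - xA‖ ^ (-a) * ENNReal.ofReal ‖x‖ ^ b) ^ q)) ^ (1 / q) *
        (avg (cube c r) (fun x => ENNReal.ofReal ‖x‖ ^ (-(b * p')))) ^ (1 / p') *
        esssupQ (cube c r) (fun x => (ENNReal.ofReal ‖x - xA‖ ^ (-a))⁻¹) ≤ C) :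
    q < (d : ℝ) / a ∧ -(d : ℝ) / q + a < b ∧ b < (d : ℝ) / p' := by
  obtain ⟨C, hCne, hbound⟩ := hmem
  haveI := nontrivial_Rd hd
  have hp0 : 0 < p := lt_trans one_pos hp
  have h1p : 1/p < 1 := (div_lt_one hp0).mpr hp
  have h1ppos : 0 < 1/p := by positivity
  have hp'inv : 0 < 1/p' := by linarith
  have hp'pos : 0 < p' := one_div_pos.mp hp'inv
  have hqinv : 0 < 1/q := by positivity
  have hxAn : 0 < ‖xA‖ := norm_pos_iff.mpr hxA
  have hdR : (0:ℝ) < d := Nat.cast_pos.mpr hd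
  -- the three integrands
  set f1 : Rd d → ℝ≥0∞ :=
    fun x => (ENNReal.ofReal ‖x - xA‖ ^ (-a) * ENNReal.ofReal ‖x‖ ^ b) ^ q with hf1
  set f2 : Rd d → ℝ≥0∞ := fun x => ENNReal.ofReal ‖x‖ ^ (-(b * p')) with hf2
  set f3 : Rd d → ℝ≥0∞ := fun x => (ENNReal.ofReal ‖x - xA‖ ^ (-a))⁻¹ with hf3
  have hf3eq : f3 = fun x => ENNReal.ofReal ‖x - xA‖ ^ a := by
    funext x
    show (ENNReal.ofReal ‖x - xA‖ ^ (-a))⁻¹ = _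
    rw [ENNReal.rpow_neg, inv_inv]
  have hmeas1 : Measurable f1 := by fun_prop
  have hmeas2 : Measurable f2 := by fun_prop
  have hmeas3 : Measurable f3 := by rw [hf3eq]; fun_prop
  -- nonvanishing
  have hune0 : ∀ x : Rd d, ENNReal.ofReal ‖x - xA‖ ^ (-a) ≠ 0 := by
    intro x h
    rcases ENNReal.rpow_eq_zero_iff.mp h with ⟨_, h2⟩ | ⟨h1, _⟩
    · linarith
    · exact ENNReal.ofReal_ne_top h1
  have hf1ne0 : ∀ x : Rd d, x ≠ 0 → f1 x ≠ 0 := by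
    intro x hx
    apply ennrpow_ne_zero _ hq
    apply mul_ne_zero (hune0 x)
    exact ennrpow_ofReal_ne_zero (norm_pos_iff.mpr hx)
  have hf2ne0 : ∀ x : Rd d, x ≠ 0 → f2 x ≠ 0 := fun x hx =>
    ennrpow_ofReal_ne_zero (norm_pos_iff.mpr hx)
  have hf3ne0 : ∀ x : Rd d, x ≠ xA → f3 x ≠ 0 := by
    intro x hx
    rw [hf3eq]
    exact ennrpow_ofReal_ne_zero (norm_pos_iff.mpr (sub_ne_zero_of_ne hx))
  -- positivity of the three factors on any cube
  have hF1pos : ∀ (c : Rd d) (r : ℝ), 0 < r → 0 < avg (cube c r) f1 := fun c r hr =>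
    avg_pos hd hr 0 f1 hmeas1 hf1ne0
  have hF2pos : ∀ (c : Rd d) (r : ℝ), 0 < r → 0 < avg (cube c r) f2 := fun c r hr =>
    avg_pos hd hr 0 f2 hmeas2 hf2ne0
  have hF3pos : ∀ (c : Rd d) (r : ℝ), 0 < r → 0 < esssupQ (cube c r) f3 := fun c r hr =>
    lt_of_lt_of_le (avg_pos hd hr xA f3 hmeas3 hf3ne0) (avg_le_esssup hr f3)
  -- if one of the first two factors is infinite on some cube we get a contradiction
  have hfin1 : ∀ (c : Rd d) (r : ℝ), 0 < r → avg (cube c r) f1 ≠ ⊤ := by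
    intro c r hr htop
    have h := hbound c r hr
    rw [htop, ENNReal.top_rpow_of_pos hqinv] at h
    rw [ENNReal.top_mul (ennrpow_ne_zero (hF2pos c r hr).ne' hp'inv),
      ENNReal.top_mul (hF3pos c r hr).ne'] at h
    exact hCne (top_le_iff.mp h)
  have hfin2 : ∀ (c : Rd d) (r : ℝ), 0 < r → avg (cube c r) f2 ≠ ⊤ := by
    intro c r hr htop
    have h := hbound c r hr
    rw [htop, ENNReal.top_rpow_of_pos hp'inv] at h
    rw [ENNReal.mul_top (ennrpow_ne_zero (hF1pos c r hr).ne' hqinv),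
      ENNReal.top_mul (hF3pos c r hr).ne'] at h
    exact hCne (top_le_iff.mp h)
  -- Part 3 : b < d / p'
  have part3 : b < (d : ℝ) / p' := by
    by_contra h3
    push_neg at h3
    have hbp' : (d:ℝ) ≤ b * p' := by
      rw [div_le_iff₀ hp'pos] at h3; linarith
    apply hfin2 0 1 one_pos
    have hI : ∫⁻ x in cube (0 : Rd d) 1, f2 x = ⊤ := by
      have hcongr : ∫⁻ x in ball (0:Rd d) 1, f2 x
          = ∫⁻ x in ball (0:Rd d) 1, ENNReal.ofReal ‖x - 0‖ ^ (-(b * p')) :=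
        lintegral_congr fun x => by rw [hf2, sub_zero]
      have htop := lintegral_rpow_near_eq_top hd (0 : Rd d) (t := -(b * p'))
        (by linarith) one_pos
      refine top_le_iff.mp ?_
      calc (⊤:ℝ≥0∞) = ∫⁻ x in ball (0:Rd d) 1, f2 x := by rw [hcongr, htop]
        _ ≤ _ := lintegral_mono_set (ball_subset_cube 0 1)
    rw [avg, ENNReal.div_eq_top]
    exact Or.inr ⟨hI, (volume_cube_lt_top _ one_pos).ne⟩
  -- Part 1 : q < d / a
  have part1 : q < (d : ℝ) / a := by
    by_contra h1
    push_neg at h1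
    have haq : (d:ℝ) ≤ a * q := by
      rw [div_le_iff₀ ha0] at h1; linarith
    apply hfin1 xA 1 one_pos
    set ε : ℝ := min (‖xA‖ / 2) 1 with hε'
    have hε : 0 < ε := lt_min (by positivity) one_pos
    have hεxA : ε ≤ ‖xA‖ / 2 := min_le_left _ _
    have hε1 : ε ≤ 1 := min_le_right _ _
    set m1 : ℝ := min ((‖xA‖ / 2) ^ b) ((3 * ‖xA‖ / 2) ^ b) with hm1'
    have hm1pos : 0 < m1 := lt_min (by positivity) (by positivity)
    have hpt : ∀ x ∈ ball xA ε,
        ENNReal.ofReal (m1 ^ q) * ENNReal.ofReal ‖x - xA‖ ^ (-(a * q)) ≤ f1 x := by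
      intro x hx
      have hdist : ‖x - xA‖ < ε := mem_ball_iff_norm.mp hx
      have hlow : ‖xA‖ / 2 ≤ ‖x‖ := by
        have h := norm_sub_norm_le xA x
        rw [norm_sub_rev x xA] at hdist
        linarith
      have hhigh : ‖x‖ ≤ 3 * ‖xA‖ / 2 := by
        have h := norm_le_norm_add_norm_sub' x xA
        linarith
      have hxn : (0:ℝ) < ‖x‖ := lt_of_lt_of_le (by positivity) hlow
      have hYm : ENNReal.ofReal m1 ≤ ENNReal.ofReal ‖x‖ ^ b := by
        rw [ENNReal.ofReal_rpow_of_pos hxn]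
        exact ENNReal.ofReal_le_ofReal (min_rpow_le (by positivity) hlow hhigh)
      calc ENNReal.ofReal (m1 ^ q) * ENNReal.ofReal ‖x - xA‖ ^ (-(a * q))
          = (ENNReal.ofReal ‖x - xA‖ ^ (-a) * ENNReal.ofReal m1) ^ q := by
            rw [ENNReal.mul_rpow_of_nonneg _ _ hq.le, ← ENNReal.rpow_mul,
              ENNReal.ofReal_rpow_of_pos hm1pos, neg_mul]
            exact mul_comm _ _
        _ ≤ f1 x := by
            rw [hf1]
            exact ENNReal.rpow_le_rpow (mul_le_mul_right hYm _) hq.le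
    have hIball : (⊤:ℝ≥0∞) ≤ ∫⁻ x in ball xA ε,
        ENNReal.ofReal (m1 ^ q) * ENNReal.ofReal ‖x - xA‖ ^ (-(a * q)) := by
      rw [lintegral_const_mul' _ _ ENNReal.ofReal_ne_top]
      rw [lintegral_rpow_near_eq_top hd xA (by linarith : -(a*q) ≤ -(d:ℝ)) hε]
      rw [ENNReal.mul_top ((ENNReal.ofReal_pos.mpr (by positivity)).ne')]
    have hI : ∫⁻ x in cube xA 1, f1 x = ⊤ := by
      refine top_le_iff.mp ?_
      calc (⊤:ℝ≥0∞) ≤ ∫⁻ x in ball xA ε,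
            ENNReal.ofReal (m1 ^ q) * ENNReal.ofReal ‖x - xA‖ ^ (-(a * q)) := hIball
        _ ≤ ∫⁻ x in ball xA ε, f1 x := setLIntegral_mono' measurableSet_ball hpt
        _ ≤ _ := lintegral_mono_set
            ((ball_subset_ball hε1).trans (ball_subset_cube xA 1))
    rw [avg, ENNReal.div_eq_top]
    exact Or.inr ⟨hI, (volume_cube_lt_top _ one_pos).ne⟩
  -- Part 2 : -d/q + a < b
  have part2 : -(d : ℝ) / q + a < b := by
    by_contra h2
    push_neg at h2
    have hba : b - a ≤ -(d:ℝ)/q := by linarith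
    have hbq : (b - a) * q ≤ -(d:ℝ) := by
      have := mul_le_mul_of_nonneg_right hba hq.le
      rwa [div_mul_cancel₀ _ hq.ne'] at this
    rcases le_or_gt (b * q) (-(d:ℝ)) with hA | hB
    · -- Case A : w^q itself is non-integrable at the origin
      apply hfin1 0 1 one_pos
      set m1 : ℝ := ((1 + ‖xA‖) ^ (-a)) ^ q with hm1'
      have hm1pos : 0 < m1 := Real.rpow_pos_of_pos (Real.rpow_pos_of_pos (by positivity) _) _
      have hpt : ∀ x ∈ ball (0:Rd d) 1,
          ENNReal.ofReal m1 * ENNReal.ofReal ‖x‖ ^ (b * q) ≤ f1 x := by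
        intro x hx
        have hxb : ‖x‖ < 1 := by simpa using mem_ball_iff_norm.mp hx
        have hxxA : ‖x - xA‖ ≤ 1 + ‖xA‖ := by
          have := norm_sub_le x xA
          linarith
        have hXm : ENNReal.ofReal ((1 + ‖xA‖) ^ (-a))
            ≤ ENNReal.ofReal ‖x - xA‖ ^ (-a) := by
          rw [← ENNReal.ofReal_rpow_of_pos (by positivity)]
          exact ennrpow_anti (ENNReal.ofReal_le_ofReal hxxA) (by linarith)
        calc ENNReal.ofReal m1 * ENNReal.ofReal ‖x‖ ^ (b * q)
            = (ENNReal.ofReal ((1 + ‖xA‖) ^ (-a)) * ENNReal.ofReal ‖x‖ ^ b) ^ q := by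
              rw [ENNReal.mul_rpow_of_nonneg _ _ hq.le, ← ENNReal.rpow_mul,
                ENNReal.ofReal_rpow_of_pos (Real.rpow_pos_of_pos (by positivity) _), hm1']
          _ ≤ f1 x := by
              rw [hf1]
              exact ENNReal.rpow_le_rpow (mul_le_mul_left hXm _) hq.le
      have hIball : (⊤:ℝ≥0∞) ≤ ∫⁻ x in ball (0:Rd d) 1,
          ENNReal.ofReal m1 * ENNReal.ofReal ‖x‖ ^ (b * q) := by
        rw [lintegral_const_mul' _ _ ENNReal.ofReal_ne_top]
        have hcongr : ∫⁻ x in ball (0:Rd d) 1, ENNReal.ofReal ‖x‖ ^ (b * q)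
            = ∫⁻ x in ball (0:Rd d) 1, ENNReal.ofReal ‖x - 0‖ ^ (b * q) :=
          lintegral_congr fun x => by rw [sub_zero]
        rw [hcongr, lintegral_rpow_near_eq_top hd (0:Rd d) hA one_pos,
          ENNReal.mul_top ((ENNReal.ofReal_pos.mpr hm1pos).ne')]
      have hI : ∫⁻ x in cube (0:Rd d) 1, f1 x = ⊤ := by
        refine top_le_iff.mp ?_
        calc (⊤:ℝ≥0∞) ≤ ∫⁻ x in ball (0:Rd d) 1,
              ENNReal.ofReal m1 * ENNReal.ofReal ‖x‖ ^ (b * q) := hIball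
          _ ≤ ∫⁻ x in ball (0:Rd d) 1, f1 x := setLIntegral_mono' measurableSet_ball hpt
          _ ≤ _ := lintegral_mono_set (ball_subset_cube 0 1)
      rw [avg, ENNReal.div_eq_top]
      exact Or.inr ⟨hI, (volume_cube_lt_top _ one_pos).ne⟩
    · -- Case B : asymptotic argument on large cubes
      clear hB
      set sd := Real.sqrt d with hsd'
      have hsd : 0 < sd := Real.sqrt_pos.mpr hdR
      have hν0 : volume (ball (0:Rd d) 1) ≠ 0 := (measure_ball_pos _ _ one_pos).ne'
      have hνt : volume (ball (0:Rd d) 1) ≠ ⊤ := measure_ball_lt_top.ne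
      set ν := volume (ball (0:Rd d) 1) with hν'
      set i0 : Fin d := ⟨0, hd⟩ with hi0
      set I₁ := ∫⁻ x in cube (0:Rd d) 1, f1 x with hI₁'
      have hI₁ne : I₁ ≠ 0 := by
        intro h0
        have hpos := hF1pos 0 1 one_pos
        rw [avg, ← hI₁', h0, ENNReal.zero_div] at hpos
        exact lt_irrefl _ hpos
      have hI₁top : I₁ ≠ ⊤ := by
        intro htop
        apply hfin1 0 1 one_pos
        rw [avg, ENNReal.div_eq_top]
        exact Or.inr ⟨htop, (volume_cube_lt_top _ one_pos).ne⟩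
      -- the constants
      set s2 : ℝ := -(b * p') with hs2'
      set m2r : ℝ := min ((1/2:ℝ) ^ s2) (sd ^ s2) with hm2r'
      have hm2rpos : 0 < m2r :=
        lt_min (Real.rpow_pos_of_pos (by norm_num) _) (Real.rpow_pos_of_pos hsd _)
      set κ2 : ℝ≥0∞ := ENNReal.ofReal (m2r * (1/(8*sd))^d) with hκ2'
      have hκ20 : κ2 ≠ 0 := by
        refine (ENNReal.ofReal_pos.mpr ?_).ne'
        apply mul_pos hm2rpos
        positivity
      set Aν : ℝ≥0∞ := ENNReal.ofReal (sd ^ ((d:ℝ)/q)) * ν ^ (1/q) with hAν'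
      have hAν0 : Aν ≠ 0 := mul_ne_zero
        (ENNReal.ofReal_pos.mpr (Real.rpow_pos_of_pos hsd _)).ne'
        (ennrpow_ne_zero hν0 hqinv)
      have hAνt : Aν ≠ ⊤ :=
        ENNReal.mul_ne_top ENNReal.ofReal_ne_top (ENNReal.rpow_ne_top_of_nonneg hqinv.le hνt)
      set K : ℝ≥0∞ := Aν⁻¹ * κ2 ^ (1/p') * ENNReal.ofReal ((1/2:ℝ) ^ a) with hK'
      have hK0 : K ≠ 0 := by
        apply mul_ne_zero
        apply mul_ne_zero
        · exact ENNReal.inv_ne_zero.mpr hAνt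
        · exact ennrpow_ne_zero hκ20 hp'inv
        · exact (ENNReal.ofReal_pos.mpr (Real.rpow_pos_of_pos (by norm_num) _)).ne'
      have hKt : K ≠ ⊤ := by
        apply ENNReal.mul_ne_top
        apply ENNReal.mul_ne_top
        · exact ENNReal.inv_ne_top.mpr hAν0
        · exact ENNReal.rpow_ne_top_of_nonneg hp'inv.le ENNReal.ofReal_ne_top
        · exact ENNReal.ofReal_ne_top
      -- the main estimate on the cube of size n
      have main : ∀ n : ℕ, 8 * (‖xA‖ + 1) ≤ (n:ℝ) → ∀ J : ℝ≥0∞,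
          (J ≤ ∫⁻ x in cube (0:Rd d) (n:ℝ), f1 x) →
          J ^ (1/q) * K * ENNReal.ofReal ((n:ℝ) ^ (a - b - (d:ℝ)/q)) ≤ C := by
        intro n hn J hJ
        have hxA8 : ‖xA‖ + 1 ≤ (n:ℝ)/8 := by linarith
        have hnpos : (0:ℝ) < n := by
          have : (0:ℝ) < 8 * (‖xA‖ + 1) := by positivity
          linarith
        have hn1 : (1:ℝ) ≤ n := by
          have h8 : (8:ℝ) ≤ 8 * (‖xA‖ + 1) := by nlinarith [norm_nonneg xA]
          linarith
        set N : ℝ := (n:ℝ)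
        set cn : Rd d := EuclideanSpace.single i0 ((3/4) * N) with hcn'
        set Q' : Set (Rd d) := cube cn (N/8) with hQ''
        have hcni0 : cn i0 = (3/4) * N := by
          rw [hcn', EuclideanSpace.single_apply]; simp
        have hcnabs : ∀ i : Fin d, |cn i| ≤ (3/4) * N := by
          intro i
          rw [hcn', EuclideanSpace.single_apply]
          split
          · rw [abs_of_nonneg (by positivity)]
          · simp; positivity
        have hQ'sub : Q' ⊆ cube (0 : Rd d) N := by
          intro x hx i
          have h := hx i
          calc |x i - (0:Rd d) i| = |(x i - cn i) + cn i| := by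
                simp only [PiLp.zero_apply, sub_zero]; ring_nf
            _ ≤ |x i - cn i| + |cn i| := abs_add_le _ _
            _ ≤ N/8 + (3/4)*N := add_le_add h (hcnabs i)
            _ ≤ N := by linarith
        have hQ'low : ∀ x ∈ Q', (5/8) * N ≤ ‖x‖ := by
          intro x hx
          have h := (abs_le.mp (hx i0)).1
          rw [hcni0] at h
          calc (5/8) * N ≤ x i0 := by linarith
            _ ≤ |x i0| := le_abs_self _
            _ ≤ ‖x‖ := coord_le_norm x i0
        have hhigh : ∀ x ∈ cube (0 : Rd d) N, ‖x‖ ≤ sd * N := by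
          intro x hx
          have := norm_sub_le_of_cube hnpos.le hx
          rwa [sub_zero] at this
        have hQ'far : ∀ x ∈ Q', (1/2) * N ≤ ‖x - xA‖ := by
          intro x hx
          have h1 := hQ'low x hx
          have h2 := norm_sub_norm_le x xA
          have h3 : ‖xA‖ ≤ N/8 := by linarith [norm_nonneg xA]
          linarith
        -- F1 lower bound
        have hVle : volume (cube (0:Rd d) N) ≤ ENNReal.ofReal ((sd * N)^d) * ν :=
          volume_cube_le 0 hnpos
        have hDen : (ENNReal.ofReal ((sd * N)^d) * ν) ^ (1/q)
            = Aν * ENNReal.ofReal (N ^ ((d:ℝ)/q)) := by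
          rw [ENNReal.mul_rpow_of_nonneg _ _ hqinv.le,
            ENNReal.ofReal_rpow_of_pos (by positivity)]
          have hre : ((sd * N)^d) ^ (1/q) = sd ^ ((d:ℝ)/q) * N ^ ((d:ℝ)/q) := by
            rw [← Real.rpow_natCast (sd * N) d, ← Real.rpow_mul (by positivity),
              Real.mul_rpow hsd.le hnpos.le, mul_one_div]
          rw [hre, ENNReal.ofReal_mul (Real.rpow_nonneg hsd.le _), hAν']
          ring
        have hF1LB : J ^ (1/q) / (Aν * ENNReal.ofReal (N ^ ((d:ℝ)/q)))
            ≤ (avg (cube (0:Rd d) N) f1) ^ (1/q) := by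
          have h1 : J / (ENNReal.ofReal ((sd * N)^d) * ν) ≤ avg (cube (0:Rd d) N) f1 :=
            ENNReal.div_le_div hJ hVle
          have h2 := ENNReal.rpow_le_rpow h1 hqinv.le
          rw [ENNReal.div_rpow_of_nonneg _ _ hqinv.le, hDen] at h2
          exact h2
        -- F2 lower bound
        have hf2pt : ∀ x ∈ Q', ENNReal.ofReal (m2r * N ^ s2) ≤ f2 x := by
          intro x hx
          have h1 : (1/2) * N ≤ ‖x‖ := by
            have := hQ'low x hx; linarith
          have h2 : ‖x‖ ≤ sd * N := hhigh x (hQ'sub hx)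
          have hxn : (0:ℝ) < ‖x‖ := lt_of_lt_of_le (by positivity) h1
          have hfx : f2 x = ENNReal.ofReal (‖x‖ ^ s2) := by
            rw [hf2]; exact ENNReal.ofReal_rpow_of_pos hxn
          rw [hfx]
          apply ENNReal.ofReal_le_ofReal
          have hmin := min_rpow_le (show (0:ℝ) < (1/2) * N by positivity) h1 h2 (t := s2)
          calc m2r * N ^ s2
              = min ((1/2:ℝ)^s2 * N^s2) (sd^s2 * N^s2) := by
                rw [hm2r', min_mul_of_nonneg _ _ (Real.rpow_nonneg hnpos.le s2)]
            _ = min (((1/2) * N)^s2) ((sd * N)^s2) := by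
                rw [← Real.mul_rpow (by norm_num) hnpos.le, ← Real.mul_rpow hsd.le hnpos.le]
            _ ≤ ‖x‖ ^ s2 := hmin
        have hvolQ' : ENNReal.ofReal ((N/8)^d) * ν ≤ volume Q' := by
          have hb : volume (ball cn (N/8)) = ENNReal.ofReal ((N/8)^d) * ν := by
            rw [Measure.addHaar_ball_of_pos volume _ (by positivity : (0:ℝ) < N/8),
              finrank_euclideanSpace_fin]
          rw [← hb]
          exact measure_mono (ball_subset_cube _ _)
        have hratio : (ENNReal.ofReal ((N/8)^d) * ν) / (ENNReal.ofReal ((sd*N)^d) * ν)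
            = ENNReal.ofReal ((1/(8*sd))^d) := by
          rw [ENNReal.mul_div_mul_right _ _ hν0 hνt,
            ← ENNReal.ofReal_div_of_pos (by positivity)]
          congr 1
          rw [← div_pow]
          congr 1
          field_simp
        have hF2LB : κ2 * ENNReal.ofReal (N ^ s2) ≤ avg (cube (0:Rd d) N) f2 := by
          have step1 : ENNReal.ofReal (m2r * N ^ s2) * volume Q' ≤ ∫⁻ x in Q', f2 x :=
            const_mul_vol_le_setLIntegral (measurableSet_cube _ _) f2 _ hf2pt
          have step2 : ENNReal.ofReal (m2r * N ^ s2) * (ENNReal.ofReal ((N/8)^d) * ν)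
                / (ENNReal.ofReal ((sd*N)^d) * ν) ≤ avg (cube (0:Rd d) N) f2 := by
            refine le_trans (ENNReal.div_le_div
              (le_trans (mul_le_mul_right hvolQ' _) step1) hVle) ?_
            exact setLIntegral_le_avg_mul hQ'sub f2
          refine le_trans (le_of_eq ?_) step2
          rw [mul_div_assoc, hratio, hκ2', ← ENNReal.ofReal_mul (by positivity),
            ← ENNReal.ofReal_mul (by positivity)]
          congr 1
          ring
        have hF2LB' : κ2 ^ (1/p') * ENNReal.ofReal (N ^ (-b))
            ≤ (avg (cube (0:Rd d) N) f2) ^ (1/p') := by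
          refine le_trans (le_of_eq ?_) (ENNReal.rpow_le_rpow hF2LB hp'inv.le)
          rw [ENNReal.mul_rpow_of_nonneg _ _ hp'inv.le,
            ENNReal.ofReal_rpow_of_pos (Real.rpow_pos_of_pos hnpos _),
            ← Real.rpow_mul hnpos.le]
          congr 2
          rw [hs2']
          congr 1
          field_simp
        -- F3 lower bound
        have hF3LB : ENNReal.ofReal ((1/2:ℝ)^a) * ENNReal.ofReal (N ^ a)
            ≤ esssupQ (cube (0:Rd d) N) f3 := by
          refine le_trans ?_ (esssup_mono_set hQ'sub f3)
          refine le_trans ?_ (avg_le_esssup (by positivity : (0:ℝ) < N/8) f3)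
          refine le_trans (le_of_eq ?_) (const_le_avg (by positivity : (0:ℝ) < N/8) f3
            (ENNReal.ofReal (((1/2)*N) ^ a)) ?_)
          · rw [← ENNReal.ofReal_mul (by positivity), ← Real.mul_rpow (by norm_num) hnpos.le]
          · intro x hx
            have h1 := hQ'far x hx
            have hfx : f3 x = ENNReal.ofReal (‖x - xA‖ ^ a) := by
              rw [hf3eq]
              exact ENNReal.ofReal_rpow_of_pos (lt_of_lt_of_le (by positivity) h1)
            rw [hfx]
            exact ENNReal.ofReal_le_ofReal
              (Real.rpow_le_rpow (by positivity) h1 ha0.le)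
        -- combining
        have hnpow : ENNReal.ofReal (N ^ (a - b - (d:ℝ)/q))
            = (ENNReal.ofReal (N ^ ((d:ℝ)/q)))⁻¹ * ENNReal.ofReal (N ^ (-b))
              * ENNReal.ofReal (N ^ a) := by
          rw [← ENNReal.ofReal_inv_of_pos (Real.rpow_pos_of_pos hnpos _),
            ← Real.rpow_neg hnpos.le,
            ← ENNReal.ofReal_mul (Real.rpow_nonneg hnpos.le _),
            ← Real.rpow_add hnpos,
            ← ENNReal.ofReal_mul (Real.rpow_nonneg hnpos.le _),
            ← Real.rpow_add hnpos]
          congr 1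
          ring
        have hsplit : J ^ (1/q) * K * ENNReal.ofReal (N ^ (a - b - (d:ℝ)/q))
            = (J ^ (1/q) / (Aν * ENNReal.ofReal (N ^ ((d:ℝ)/q))))
              * (κ2 ^ (1/p') * ENNReal.ofReal (N ^ (-b)))
              * (ENNReal.ofReal ((1/2:ℝ)^a) * ENNReal.ofReal (N ^ a)) := by
          have hDinv : (Aν * ENNReal.ofReal (N ^ ((d:ℝ)/q)))⁻¹
              = Aν⁻¹ * (ENNReal.ofReal (N ^ ((d:ℝ)/q)))⁻¹ :=
            ENNReal.mul_inv (Or.inl hAν0) (Or.inl hAνt)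
          rw [hnpow, hK', ENNReal.div_eq_inv_mul, hDinv]
          ring
        calc J ^ (1/q) * K * ENNReal.ofReal (N ^ (a - b - (d:ℝ)/q))
            = _ := hsplit
          _ ≤ (avg (cube (0:Rd d) N) f1) ^ (1/q) * (avg (cube (0:Rd d) N) f2) ^ (1/p')
              * esssupQ (cube (0:Rd d) N) f3 :=
            mul_le_mul' (mul_le_mul' hF1LB hF2LB') hF3LB
          _ ≤ C := hbound 0 N hnpos
      -- now split on whether (b-a)q < -d or = -d
      rcases lt_or_eq_of_le hbq with hlt | heq
      · -- subcritical : power growth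
        have hXq : ((d:ℝ)/q) * q = d := div_mul_cancel₀ _ hq.ne'
        have he : 0 < a - b - (d:ℝ)/q := by nlinarith [hlt, hXq, hq]
        set κ : ℝ≥0∞ := I₁ ^ (1/q) * K with hκ'
        have hκ0 : κ ≠ 0 := mul_ne_zero (ennrpow_ne_zero hI₁ne hqinv) hK0
        have hκt : κ ≠ ⊤ :=
          ENNReal.mul_ne_top (ENNReal.rpow_ne_top_of_nonneg hqinv.le hI₁top) hKt
        have hCκ : C / κ ≠ ⊤ := by
          intro h
          rcases ENNReal.div_eq_top.mp h with ⟨_, h2⟩ | ⟨h1, _⟩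
          · exact hκ0 h2
          · exact hCne h1
        set e := a - b - (d:ℝ)/q with he'
        set T : ℝ := (C / κ).toReal with hT'
        set Z : ℝ := max 1 (T + 1) with hZ'
        have hZ1 : (1:ℝ) ≤ Z := le_max_left _ _
        obtain ⟨n, hn⟩ := exists_nat_ge (max (8 * (‖xA‖ + 1)) (Z ^ (1/e)))
        have hn8 : 8 * (‖xA‖ + 1) ≤ (n:ℝ) := le_trans (le_max_left _ _) hn
        have hnZ : Z ^ (1/e) ≤ (n:ℝ) := le_trans (le_max_right _ _) hn
        have hn1' : (1:ℝ) ≤ (n:ℝ) := by nlinarith [norm_nonneg xA]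
        have hZeq : (Z ^ (1/e)) ^ e = Z := by
          rw [← Real.rpow_mul (by linarith : (0:ℝ) ≤ Z), one_div_mul_cancel he.ne',
            Real.rpow_one]
        have hZn : Z ≤ (n:ℝ) ^ e := by
          rw [← hZeq]
          exact Real.rpow_le_rpow (Real.rpow_nonneg (by linarith) _) hnZ he.le
        have hTlt : T < (n:ℝ) ^ e :=
          lt_of_lt_of_le (lt_of_lt_of_le (lt_add_one T) (le_max_right _ _)) hZn
        have hmain := main n hn8 I₁ (lintegral_mono_set (cube_mono hn1'))
        have hle : ENNReal.ofReal ((n:ℝ) ^ e) ≤ C / κ := by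
          rw [ENNReal.le_div_iff_mul_le (Or.inl hκ0) (Or.inl hκt), hκ']
          calc ENNReal.ofReal ((n:ℝ) ^ e) * (I₁ ^ (1/q) * K)
              = I₁ ^ (1/q) * K * ENNReal.ofReal ((n:ℝ) ^ e) := by ring
            _ ≤ C := hmain
        have hgt : C / κ < ENNReal.ofReal ((n:ℝ) ^ e) :=
          (ENNReal.lt_ofReal_iff_toReal_lt hCκ).mpr hTlt
        exact absurd hle (not_le.mpr hgt)
      · -- critical : logarithmic growth
        have he0 : a - b - (d:ℝ)/q = 0 := by
          have h' : (d:ℝ) = (a - b) * q := by nlinarith [heq]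
          rw [h']
          field_simp
          ring
        set ρ : ℝ := ‖xA‖ + 1 with hρ'
        have hρpos : 0 < ρ := by positivity
        set g : Rd d → ℝ≥0∞ := fun x => ENNReal.ofReal ‖x‖ ^ (-(d:ℝ)) with hg'
        have hgmeas : Measurable g := by rw [hg']; fun_prop
        set μ' := volume.withDensity g with hμ''
        set S : ℕ → Set (Rd d) := fun n => cube (0:Rd d) (n:ℝ) \ ball 0 ρ with hS'
        have hSm : ∀ n, MeasurableSet (S n) := fun n =>
          (measurableSet_cube _ _).diff measurableSet_ball
        have hSmono : Monotone S := fun m n h =>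
          Set.diff_subset_diff_left (cube_mono (Nat.cast_le.mpr h))
        have hSU : ⋃ n, S n = (ball (0:Rd d) ρ)ᶜ := by
          apply Set.Subset.antisymm
          · exact Set.iUnion_subset fun n x hx => hx.2
          · intro x hx
            obtain ⟨n, hn⟩ := exists_nat_ge ‖x‖
            refine Set.mem_iUnion.mpr ⟨n, ⟨fun i => ?_, hx⟩⟩
            simp only [PiLp.zero_apply, sub_zero]
            exact le_trans (coord_le_norm x i) hn
        have hμtop : μ' ((ball (0:Rd d) ρ)ᶜ) = ⊤ := by
          rw [hμ'', withDensity_apply g measurableSet_ball.compl]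
          exact lintegral_rpow_far_eq_top hd hρpos
        have htend : Filter.Tendsto (fun n => μ' (S n)) Filter.atTop (nhds ⊤) := by
          have h := tendsto_measure_iUnion_atTop (μ := μ') hSmono
          rwa [hSU, hμtop] at h
        set κb : ℝ≥0∞ := (ENNReal.ofReal ((2:ℝ) ^ (-(a*q)))) ^ (1/q) * K with hκb'
        have hκb0 : κb ≠ 0 := mul_ne_zero
          (ennrpow_ne_zero (ENNReal.ofReal_pos.mpr
            (Real.rpow_pos_of_pos two_pos _)).ne' hqinv) hK0
        have hκbt : κb ≠ ⊤ := ENNReal.mul_ne_top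
          (ENNReal.rpow_ne_top_of_nonneg hqinv.le ENNReal.ofReal_ne_top) hKt
        have hCκ : C / κb ≠ ⊤ := by
          intro h
          rcases ENNReal.div_eq_top.mp h with ⟨_, h2⟩ | ⟨h1, _⟩
          · exact hκb0 h2
          · exact hCne h1
        set D' : ℝ≥0∞ := (C / κb) ^ q with hD''
        have hD't : D' ≠ ⊤ := ENNReal.rpow_ne_top_of_nonneg hq.le hCκ
        have hbnd : ∀ n : ℕ, 8 * (‖xA‖ + 1) ≤ (n:ℝ) → μ' (S n) ≤ D' := by
          intro n hn
          have hpt : ∀ x ∈ S n, ENNReal.ofReal ((2:ℝ) ^ (-(a*q))) * g x ≤ f1 x := by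
            intro x hx
            have hxnorm : ρ ≤ ‖x‖ := by
              have h2 := hx.2
              simp only [mem_ball, dist_zero_right, not_lt] at h2
              exact h2
            have hxApos : (0:ℝ) ≤ ‖xA‖ := norm_nonneg xA
            have hx1 : (1:ℝ) ≤ ‖x‖ := by rw [hρ'] at hxnorm; linarith
            have hxpos : (0:ℝ) < ‖x‖ := by linarith
            have hfar1 : (1:ℝ) ≤ ‖x - xA‖ := by
              have h := norm_sub_norm_le x xA
              rw [hρ'] at hxnorm
              linarith
            have hfar2 : ‖x - xA‖ ≤ 2 * ‖x‖ := by
              have h := norm_sub_le x xA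
              rw [hρ'] at hxnorm
              linarith
            have hreal : ((2*‖x‖) ^ (-a) * ‖x‖ ^ b) ^ q
                = 2 ^ (-(a*q)) * ‖x‖ ^ (-(d:ℝ)) := by
              rw [Real.mul_rpow (by norm_num) hxpos.le,
                mul_assoc, ← Real.rpow_add hxpos,
                Real.mul_rpow (Real.rpow_nonneg (by norm_num) _)
                  (Real.rpow_nonneg hxpos.le _),
                ← Real.rpow_mul (by norm_num : (0:ℝ) ≤ 2), ← Real.rpow_mul hxpos.le,
                neg_mul]
              congr 1
              rw [← heq]
              ring
            have hfle : ENNReal.ofReal (((2*‖x‖) ^ (-a) * ‖x‖ ^ b) ^ q) ≤ f1 x := by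
              rw [hf1]
              have hXge : ENNReal.ofReal ((2*‖x‖) ^ (-a))
                  ≤ ENNReal.ofReal ‖x - xA‖ ^ (-a) := by
                rw [← ENNReal.ofReal_rpow_of_pos (by positivity)]
                exact ennrpow_anti (ENNReal.ofReal_le_ofReal hfar2) (by linarith)
              calc ENNReal.ofReal (((2*‖x‖) ^ (-a) * ‖x‖ ^ b) ^ q)
                  = (ENNReal.ofReal ((2*‖x‖) ^ (-a)) * ENNReal.ofReal ‖x‖ ^ b) ^ q := by
                    rw [ENNReal.ofReal_rpow_of_pos hxpos,
                      ← ENNReal.ofReal_mul (Real.rpow_nonneg (by positivity) _),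
                      ENNReal.ofReal_rpow_of_pos (mul_pos
                        (Real.rpow_pos_of_pos (by positivity) _)
                        (Real.rpow_pos_of_pos hxpos _))]
                _ ≤ (ENNReal.ofReal ‖x - xA‖ ^ (-a) * ENNReal.ofReal ‖x‖ ^ b) ^ q :=
                    ENNReal.rpow_le_rpow (mul_le_mul_left hXge _) hq.le
            calc ENNReal.ofReal ((2:ℝ) ^ (-(a*q))) * g x
                = ENNReal.ofReal ((2:ℝ) ^ (-(a*q)) * ‖x‖ ^ (-(d:ℝ))) := by
                  have hgx : g x = ENNReal.ofReal (‖x‖ ^ (-(d:ℝ))) :=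
                    ENNReal.ofReal_rpow_of_pos hxpos
                  rw [hgx, ← ENNReal.ofReal_mul (Real.rpow_nonneg (by norm_num) _)]
              _ = ENNReal.ofReal (((2*‖x‖) ^ (-a) * ‖x‖ ^ b) ^ q) := by rw [hreal]
              _ ≤ f1 x := hfle
          have hJle : ENNReal.ofReal ((2:ℝ) ^ (-(a*q))) * μ' (S n)
              ≤ ∫⁻ x in cube (0:Rd d) (n:ℝ), f1 x := by
            rw [hμ'', withDensity_apply g (hSm n),
              ← lintegral_const_mul' _ _ ENNReal.ofReal_ne_top]
            exact le_trans (setLIntegral_mono' (hSm n) hpt)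
              (lintegral_mono_set Set.diff_subset)
          have hmain := main n hn _ hJle
          rw [he0, Real.rpow_zero, ENNReal.ofReal_one, mul_one,
            ENNReal.mul_rpow_of_nonneg _ _ hqinv.le] at hmain
          have hmain' : κb * μ' (S n) ^ (1/q) ≤ C := by
            rw [hκb']
            calc (ENNReal.ofReal ((2:ℝ) ^ (-(a*q)))) ^ (1/q) * K * μ' (S n) ^ (1/q)
                = (ENNReal.ofReal ((2:ℝ) ^ (-(a*q)))) ^ (1/q) * μ' (S n) ^ (1/q) * K := by
                  ring
              _ ≤ C := hmain
          have h1 : μ' (S n) ^ (1/q) ≤ C / κb := by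
            rw [ENNReal.le_div_iff_mul_le (Or.inl hκb0) (Or.inl hκbt)]
            calc μ' (S n) ^ (1/q) * κb = κb * μ' (S n) ^ (1/q) := mul_comm _ _
              _ ≤ C := hmain'
          calc μ' (S n) = (μ' (S n) ^ (1/q)) ^ q := by
                rw [← ENNReal.rpow_mul, one_div_mul_cancel hq.ne', ENNReal.rpow_one]
            _ ≤ (C / κb) ^ q := ENNReal.rpow_le_rpow h1 hq.le
        have hev1 : ∀ᶠ n : ℕ in Filter.atTop, 8 * (‖xA‖ + 1) ≤ (n:ℝ) := by
          obtain ⟨m, hm⟩ := exists_nat_ge (8 * (‖xA‖ + 1))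
          filter_upwards [Filter.eventually_ge_atTop m] with n hn
          exact le_trans hm (Nat.cast_le.mpr hn)
        have hev2 : ∀ᶠ n : ℕ in Filter.atTop, D' < μ' (S n) :=
          htend.eventually (eventually_gt_nhds (lt_top_iff_ne_top.mpr hD't))
        obtain ⟨n, hn1, hn2⟩ := (hev1.and hev2).exists
        exact absurd (hbnd n hn1) (not_le.mpr hn2)
  exact ⟨part1, part2, part3⟩
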